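/- arXiv:1210.2178 — 4 statements merged into one kernel-verified Lean document; each statement's English description precedes it below -/
import Mathlib

section
/- Let a > 0, Δt > 0, and let (Wᵏ)_{k≥1} be a sequence of nonnegative reals satisfying W^{k+1} ≤ Wᵏ - (a/2)Δt (Wᵏ)² for all k ≥ 1, and W¹ ≤ 1/(aΔt). Let w solve w'(t) = -(a/2)w(t)² with w(Δt) = 1/(aΔt). Then Wᵏ ≤ w(kΔt) for all k ≥ 1; in particular Wᵏ ≤ 2/(a k Δt). -/
open Set

lemma disc_step (c x K : ℝ) (hc : 0 < c) (hx0 : 0 ≤ x) (hK : 1 ≤ K)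
    (hxB : x ≤ 2 / (c * (K + 1))) :
    x - c/2 * x^2 ≤ 2 / (c * (K + 2)) := by
  have h1 : 0 < c * (K + 1) := by positivity
  have h2 : 0 < c * (K + 2) := by positivity
  rw [le_div_iff₀ h1] at hxB
  rw [le_div_iff₀ h2]
  nlinarith [sq_nonneg (x * c * (K+1) - 2), mul_nonneg (mul_nonneg hx0 hc.le) (sub_nonneg.2 hK),
    mul_nonneg (sub_nonneg.2 hxB) (mul_nonneg hx0 hc.le),
    mul_nonneg (mul_nonneg (sub_nonneg.2 hxB) (mul_nonneg hx0 hc.le)) (sub_nonneg.2 hK)]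

lemma disc_bound (a Δt : ℝ) (ha : 0 < a) (hΔt : 0 < Δt)
    (W : ℕ → ℝ) (hWnn : ∀ k ≥ 1, 0 ≤ W k)
    (hWrec : ∀ k ≥ 1, W (k + 1) ≤ W k - (a/2) * Δt * (W k)^2)
    (hW1 : W 1 ≤ 1 / (a * Δt)) :
    ∀ k ≥ 1, W k ≤ 2 / ((a * Δt) * (k + 1)) := by
  have hc : 0 < a * Δt := by positivity
  intro k hk
  induction k, hk using Nat.le_induction with
  | base =>
    rw [Nat.cast_one]
    calc W 1 ≤ 1 / (a * Δt) := hW1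
    _ = 2 / ((a * Δt) * (1 + 1)) := by ring
  | succ n hn ih =>
    have hn1 : (1:ℝ) ≤ (n:ℝ) := by exact_mod_cast hn
    have hx0 : 0 ≤ W n := hWnn n hn
    have key : W n - (a*Δt)/2 * (W n)^2 ≤ 2 / ((a*Δt) * ((n:ℝ) + 2)) :=
      disc_step (a*Δt) (W n) (n:ℝ) hc hx0 hn1 ih
    calc W (n+1) ≤ W n - (a/2) * Δt * (W n)^2 := hWrec n hn
    _ = W n - (a*Δt)/2 * (W n)^2 := by ring
    _ ≤ 2 / ((a*Δt) * ((n:ℝ) + 2)) := key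
    _ = 2 / ((a*Δt) * ((n:ℝ) + 1 + 1)) := by ring_nf
    _ = 2 / ((a*Δt) * (((n+1:ℕ):ℝ) + 1)) := by push_cast; ring_nf

theorem stmt_1 (a Δt : ℝ) (ha : 0 < a) (hΔt : 0 < Δt)
    (W : ℕ → ℝ) (hWnn : ∀ k ≥ 1, 0 ≤ W k)
    (hWrec : ∀ k ≥ 1, W (k + 1) ≤ W k - (a/2) * Δt * (W k)^2)
    (hW1 : W 1 ≤ 1 / (a * Δt))
    (w : ℝ → ℝ) (hwinit : w Δt = 1 / (a * Δt))
    (hode : ∀ t ∈ Set.Ici Δt, HasDerivAt w (-(a/2) * (w t)^2) t) :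
    ∀ k ≥ 1, W k ≤ w (k * Δt) ∧ W k ≤ 2 / (a * k * Δt) := by
  intro k hk
  have hk1 : (1:ℝ) ≤ (k:ℝ) := by exact_mod_cast hk
  have hkpos : (0:ℝ) < (k:ℝ) := lt_of_lt_of_le one_pos hk1
  have hB := disc_bound a Δt ha hΔt W hWnn hWrec hW1 k hk
  -- the explicit solution
  set u : ℝ → ℝ := fun t => 2 / (a * (t + Δt)) with hu_def
  set T : ℝ := (k:ℝ) * Δt with hT_def
  have hT : Δt ≤ T := by
    rw [hT_def]; nlinarith
  have hu' : ∀ t, Δt ≤ t → HasDerivAt u (-(a/2) * (u t)^2) t := by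
    intro t ht
    have htΔ : 0 < t + Δt := by linarith
    have hne : a * (t + Δt) ≠ 0 := by positivity
    have h1 : HasDerivAt (fun t => a * (t + Δt)) a t := by
      simpa using ((hasDerivAt_id t).add_const Δt).const_mul a
    have h2 : HasDerivAt (fun t => 2 / (a * (t + Δt))) (2 * (-(a) / (a * (t + Δt))^2)) t := by
      simpa [div_eq_mul_inv] using (h1.inv hne).const_mul 2
    convert h2 using 1
    rw [hu_def]
    field_simp
  -- continuity of w on the interval and bound
  have hwcont : ContinuousOn w (Icc Δt T) := fun t ht =>
    ((hode t ht.1).continuousAt).continuousWithinAt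
  obtain ⟨C1, hC1⟩ := (isCompact_Icc).exists_bound_of_continuousOn hwcont
  set C : ℝ := max C1 (1 / (a * Δt)) with hC_def
  have hC0 : 0 ≤ C := le_trans (by positivity) (le_max_right _ _)
  have hKnn : 0 ≤ a * C := by positivity
  set Knn : NNReal := ⟨a * C, hKnn⟩ with hK_def
  have hlip : ∀ t : ℝ, LipschitzOnWith Knn (fun y : ℝ => -(a/2) * y^2) (Metric.closedBall 0 C) := by
    intro t
    rw [lipschitzOnWith_iff_dist_le_mul]
    intro x hx y hy
    simp only [Metric.mem_closedBall, Real.dist_eq, sub_zero] at hx hy ⊢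
    have : -(a/2) * x^2 - -(a/2) * y^2 = -(a/2) * (x + y) * (x - y) := by ring
    rw [this, abs_mul, abs_mul]
    have h1 : |(-(a/2))| = a/2 := by rw [abs_neg, abs_of_pos (by linarith)]
    rw [h1]
    have h2 : |x + y| ≤ 2 * C := by
      calc |x + y| ≤ |x| + |y| := abs_add_le x y
      _ ≤ 2 * C := by linarith
    have h3 : (0:ℝ) ≤ |x - y| := abs_nonneg _
    calc a/2 * |x + y| * |x - y| ≤ a/2 * (2*C) * |x - y| := by
          apply mul_le_mul_of_nonneg_right _ h3
          exact mul_le_mul_of_nonneg_left h2 (by linarith)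
    _ = (Knn : ℝ) * |x - y| := by rw [hK_def]; show a/2 * (2*C) * |x - y| = a * C * |x - y|; ring
  -- w = u on [Δt, T]
  have hweq : w T = u T := by
    have huw : EqOn w u (Icc Δt T) := by
      apply ODE_solution_unique_of_mem_Icc_right (v := fun _ y => -(a/2) * y^2)
        (s := fun _ => Metric.closedBall 0 C) (fun t _ => hlip t) hwcont
      · intro t ht
        exact (hode t ht.1).hasDerivWithinAt
      · intro t ht
        have := hC1 t (Ico_subset_Icc_self ht)
        simp only [Metric.mem_closedBall, Real.dist_eq, sub_zero]
        calc |w t| ≤ C1 := this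
        _ ≤ C := le_max_left _ _
      · intro t ht
        exact ((hu' t ht.1).continuousAt).continuousWithinAt
      · intro t ht
        exact (hu' t ht.1).hasDerivWithinAt
      · intro t ht
        have htΔ : Δt ≤ t := ht.1
        have hpos : 0 < a * (t + Δt) := mul_pos ha (by linarith)
        have hut : 0 < u t := by simp only [hu_def]; exact div_pos two_pos hpos
        have hub : u t ≤ 1 / (a * Δt) := by
          rw [hu_def]
          rw [div_le_div_iff₀ hpos (by positivity)]
          nlinarith
        simp only [Metric.mem_closedBall, Real.dist_eq, sub_zero]
        rw [abs_of_pos hut]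
        exact le_trans hub (le_max_right _ _)
      · rw [hwinit, hu_def]
        rw [eq_div_iff (by positivity)]
        field_simp
        ring
    exact huw ⟨hT, le_refl T⟩
  -- conclude
  have huT : u T = 2 / ((a * Δt) * ((k:ℝ) + 1)) := by
    rw [hu_def, hT_def]
    congr 1
    ring
  constructor
  · rw [hweq, huT]; exact hB
  · calc W k ≤ 2 / ((a * Δt) * ((k:ℝ) + 1)) := hB
    _ ≤ 2 / (a * k * Δt) := by
        apply div_le_div_of_nonneg_left (by norm_num) (by positivity)
        nlinarith
end

section
/- Let w : ℝ/ℤ → ℝ satisfy the one-sided Lipschitz condition (w(x₁) - w(x₂))/(x₁ - x₂) ≤ b₃ for all x₁ > x₂ (with b₃ > 0), and suppose |∫_{x'}^{x} w(y) dy| ≤ b₂ √(Δx) for all x, x' and some b₂ > 0, Δx ∈ (0,1]. Then for any b₄ > 0 with b₄²/(4b₂) > b₃, we have sup_x |w(x)| ≤ b₄ Δx^{1/4}. -/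
/-!
If the difference quotients of `w` are bounded above by `b`, then `w` cannot fall quickly to the
left of a large value, nor rise quickly to the right of a very negative one: `w x = M > 0` forces
`w ≥ M - b (x - y)` on `[x - M/b, x]`, an interval carrying mass at least `M² / (2b)`, and
`w x = -M` forces `w ≤ b (y - x) - M` on `[x, x + M/b]`. So a uniform bound `C` on the integrals
of `w` gives `(w x)² ≤ 2 b C`; with `C = b₂ √Δx` and `2 b₂ b₃ < b₄²` this is the `Δx^{1/4}` bound.
-/

open MeasureTheory intervalIntegral

section OneSidedLipschitz

variable {w : ℝ → ℝ} {b C M x : ℝ}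

lemma integral_sub_mul_sub_left (hb : 0 < b) :
    ∫ y in x - M / b..x, (M - b * (x - y)) = M ^ 2 / (2 * b) := by
  rw [integral_comp_sub_left (fun t => M - b * t) x, integral_sub intervalIntegrable_const
    (intervalIntegrable_id.const_mul b), intervalIntegral.integral_const_mul, integral_id,
    intervalIntegral.integral_const, smul_eq_mul]
  field_simp
  ring

lemma integral_mul_sub_sub_right (hb : 0 < b) :
    ∫ y in x..x + M / b, (b * (y - x) - M) = -(M ^ 2 / (2 * b)) := by
  rw [integral_comp_sub_right (fun t => b * t - M) x, integral_sub
    (intervalIntegrable_id.const_mul b) intervalIntegrable_const,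
    intervalIntegral.integral_const_mul, integral_id, intervalIntegral.integral_const, smul_eq_mul]
  field_simp
  ring

variable (hb : 0 < b) (hint : ∀ x x' : ℝ, IntervalIntegrable w volume x' x)
  (holz : ∀ x₁ x₂ : ℝ, x₂ < x₁ → w x₁ - w x₂ ≤ b * (x₁ - x₂))
include hb hint holz

lemma sq_div_le_integral_of_le (hM : 0 ≤ M) (hw : M ≤ w x) :
    M ^ 2 / (2 * b) ≤ ∫ y in x - M / b..x, w y := by
  rw [← integral_sub_mul_sub_left hb]
  refine integral_mono_on (by linarith [div_nonneg hM hb.le])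
    (Continuous.intervalIntegrable (by fun_prop) _ _) (hint x _) fun y hy => ?_
  rcases hy.2.eq_or_lt with rfl | hyx
  · linarith
  · linarith [holz x y hyx]

lemma integral_le_neg_sq_div_of_le_neg (hM : 0 ≤ M) (hw : w x ≤ -M) :
    ∫ y in x..x + M / b, w y ≤ -(M ^ 2 / (2 * b)) := by
  rw [← integral_mul_sub_sub_right hb]
  refine integral_mono_on (by linarith [div_nonneg hM hb.le])
    (hint _ x) (Continuous.intervalIntegrable (by fun_prop) _ _) fun y hy => ?_
  rcases hy.1.eq_or_lt with rfl | hxy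
  · linarith
  · linarith [holz y x hxy]

lemma sq_le_of_abs_integral_le (hbound : ∀ x x' : ℝ, |∫ y in x'..x, w y| ≤ C) (x : ℝ) :
    w x ^ 2 ≤ 2 * b * C := by
  suffices w x ^ 2 / (2 * b) ≤ C by rwa [div_le_iff₀ (by positivity), mul_comm] at this
  rcases le_total 0 (w x) with hw | hw
  · calc w x ^ 2 / (2 * b) ≤ ∫ y in x - w x / b..x, w y :=
          sq_div_le_integral_of_le hb hint holz hw le_rfl
      _ ≤ C := (le_abs_self _).trans (hbound _ _)
  · calc w x ^ 2 / (2 * b) = (-w x) ^ 2 / (2 * b) := by rw [neg_sq]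
      _ ≤ -∫ y in x..x + -w x / b, w y :=
          le_neg.mpr (integral_le_neg_sq_div_of_le_neg hb hint holz (neg_nonneg.mpr hw) (neg_neg _).ge)
      _ ≤ C := (neg_le_abs _).trans (hbound _ _)

end OneSidedLipschitz

theorem stmt_4_general (b₂ b₃ b₄ Δx : ℝ) (hb₂ : 0 < b₂) (hb₃ : 0 < b₃) (hb₄ : 0 < b₄)
    (hΔx : Δx ∈ Set.Ioc (0:ℝ) 1)
    (h₄₃ : b₄^2 / (4 * b₂) > b₃)
    (w : ℝ → ℝ)
    (hint : ∀ x x' : ℝ, IntervalIntegrable w MeasureTheory.volume x' x)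
    (holz : ∀ x₁ x₂ : ℝ, x₂ < x₁ → w x₁ - w x₂ ≤ b₃ * (x₁ - x₂))
    (hbound : ∀ x x' : ℝ, |∫ y in x'..x, w y| ≤ b₂ * Real.sqrt Δx) :
    ∀ x, |w x| ≤ b₄ * Δx ^ ((1:ℝ)/4) := by
  intro x
  have hsqrt : (Δx ^ ((1:ℝ)/4)) ^ 2 = Real.sqrt Δx := by
    rw [← Real.rpow_natCast, ← Real.rpow_mul hΔx.1.le, Real.sqrt_eq_rpow]
    norm_num
  have hb : 2 * b₃ * b₂ ≤ b₄ ^ 2 := by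
    rw [gt_iff_lt, lt_div_iff₀ (by positivity)] at h₄₃
    linarith [mul_pos hb₃ hb₂]
  refine abs_le_of_sq_le_sq ?_ (mul_nonneg hb₄.le (Real.rpow_nonneg hΔx.1.le _))
  calc w x ^ 2 ≤ 2 * b₃ * (b₂ * Real.sqrt Δx) := sq_le_of_abs_integral_le hb₃ hint holz hbound x
    _ ≤ b₄ ^ 2 * Real.sqrt Δx := by rw [← mul_assoc]; gcongr
    _ = (b₄ * Δx ^ ((1:ℝ)/4)) ^ 2 := by rw [mul_pow, hsqrt]

theorem stmt_4 (b₂ b₃ b₄ Δx : ℝ) (hb₂ : 0 < b₂) (hb₃ : 0 < b₃) (hb₄ : 0 < b₄)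
    (hΔx : Δx ∈ Set.Ioc (0:ℝ) 1)
    (h₄₃ : b₄^2 / (4 * b₂) > b₃)
    (w : ℝ → ℝ) (hper : Function.Periodic w 1)
    (hint : ∀ x x' : ℝ, IntervalIntegrable w MeasureTheory.volume x' x)
    (holz : ∀ x₁ x₂ : ℝ, x₂ < x₁ → w x₁ - w x₂ ≤ b₃ * (x₁ - x₂))
    (hbound : ∀ x x' : ℝ, |∫ y in x'..x, w y| ≤ b₂ * Real.sqrt Δx) :
    ∀ x, |w x| ≤ b₄ * Δx ^ ((1:ℝ)/4) :=
  stmt_4_general b₂ b₃ b₄ Δx hb₂ hb₃ hb₄ hΔx h₄₃ w hint holz hbound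
end

section
/- Consider the inhomogeneous backward random walk on the grid with step Δx in space and Δt in time, started at x_n at time t_{l+1}, with drift control ξ : G → [-1/λ, 1/λ] (λ = Δt/Δx), where at each site the walk moves +Δx with probability ρ = 1/2 + (λ/2)ξ and -Δx with probability 1/2 - (λ/2)ξ. Define η^{l+1}(γ) := γ^{l+1} and η^k(γ) := γ^{l+1} - Σ_{k < k' ≤ l+1} ξ(γ^{k'}, t_{k'}) Δt for k ≤ l. Then the variance σ̃ᵏ := E[|γᵏ - ηᵏ(γ)|²] satisfies σ̃ᵏ ≤ (t^{l+1} - t^k)/λ · Δx, and the mean deviation d̃ᵏ := E[|γᵏ - ηᵏ(γ)|] satisfies (d̃ᵏ)² ≤ σ̃ᵏ. -/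
/-- The backward random walk path determined by the step signs `s`:
`rwPath xn Δx l s k` is the position `γᵏ`, with `γ^{l+1} = xn` and
`γ^{k+1} - γᵏ = ±Δx` (`+Δx` when `s k = true`). -/
noncomputable def rwPath (xn Δx : ℝ) (l : ℕ) (s : ℕ → Bool) (k : ℕ) : ℝ :=
  xn - Δx * ∑ k' ∈ Finset.Ico k (l + 1), (if s k' then (1:ℝ) else -1)

/-- Probability weight of a sample path: at the step from `(γ^{k+1}, t_{k+1})`,
the walk moves by `-Δx` with probability `1/2 + (λ/2) ξ` and by `+Δx` with
probability `1/2 - (λ/2) ξ`, where `ξ` is evaluated at `(γ^{k+1}, t_{k+1})`. -/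
noncomputable def rwWeight (xn Δx lam : ℝ) (ξ : ℝ → ℕ → ℝ) (l : ℕ) (s : ℕ → Bool) : ℝ :=
  ∏ k ∈ Finset.range (l + 1),
    if s k then (1/2 + lam/2 * ξ (rwPath xn Δx l s (k + 1)) (k + 1))
    else (1/2 - lam/2 * ξ (rwPath xn Δx l s (k + 1)) (k + 1))

/-- The compensated (averaged) path `ηᵏ(γ) = γ^{l+1} - Σ_{k < k' ≤ l+1} ξ(γ^{k'}, t_{k'}) Δt`. -/
noncomputable def rwEta (xn Δx Δt : ℝ) (ξ : ℝ → ℕ → ℝ) (l : ℕ) (s : ℕ → Bool) (k : ℕ) : ℝ :=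
  xn - Δt * ∑ k' ∈ Finset.Ico (k + 1) (l + 2), ξ (rwPath xn Δx l s k') k'

/-- Extension of step signs indexed by `Fin (l+1)` to all of `ℕ`. -/
def extBool (l : ℕ) (s : Fin (l + 1) → Bool) : ℕ → Bool :=
  fun k => if h : k < l + 1 then s ⟨k, h⟩ else false

/-- Expectation of a random variable `f` of the sample path with respect to the
random-walk measure. -/
noncomputable def rwExp (xn Δx Δt lam : ℝ) (ξ : ℝ → ℕ → ℝ) (l : ℕ)
    (f : (ℕ → Bool) → ℝ) : ℝ :=
  ∑ s : Fin (l + 1) → Bool,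
    rwWeight xn Δx lam ξ l (extBool l s) * f (extBool l s)

/-! Write `Dᵏ = γᵏ - ηᵏ(γ)`. The walk is a Markov chain started at `xₙ` at the top time level,
so conditioning on its first step reduces a walk of `l + 2` steps to one of `l + 1` steps started at
`xₙ ∓ Δx`, under which `Dᵏ` is shifted by the constant `Δt ξ(xₙ) ∓ Δx`. Because `λ Δx = Δt` this
increment has mean zero and second moment `Δx² - (Δt ξ)² ≤ Δx²`, so by induction on the length of
the walk `E[Dᵏ] = 0` and `E[(Dᵏ)²]` grows by at most `Δx²` per step. The bound on `d̃ᵏ` is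
Cauchy–Schwarz for the probability weights. -/

open Finset

noncomputable def stepProb (lam c : ℝ) (b : Bool) : ℝ :=
  if b then 1/2 + lam/2 * c else 1/2 - lam/2 * c

def stepSign (b : Bool) : ℝ := if b then 1 else -1

noncomputable def rwDev (xn Δx Δt : ℝ) (ξ : ℝ → ℕ → ℝ) (l k : ℕ) (s : ℕ → Bool) : ℝ :=
  rwPath xn Δx l s k - rwEta xn Δx Δt ξ l s k

section stepProb

variable {lam c Δx Δt : ℝ}

lemma sum_stepProb : ∑ b, stepProb lam c b = 1 := by
  simp only [stepProb, Fintype.sum_bool, if_true, Bool.false_eq_true, if_false]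
  ring

lemma stepProb_nonneg (h : |lam * c| ≤ 1) (b : Bool) : 0 ≤ stepProb lam c b := by
  have := abs_le.mp h
  cases b <;> simp only [stepProb, if_true, Bool.false_eq_true, if_false] <;> nlinarith

lemma sum_stepProb_mul_increment (hld : lam * Δx = Δt) :
    ∑ b, stepProb lam c b * (Δt * c - Δx * stepSign b) = 0 := by
  simp only [stepProb, stepSign, Fintype.sum_bool, if_true, Bool.false_eq_true, if_false]
  rw [← hld]
  ring

lemma sum_stepProb_mul_increment_sq (hld : lam * Δx = Δt) :
    ∑ b, stepProb lam c b * (Δt * c - Δx * stepSign b) ^ 2 = Δx ^ 2 - (Δt * c) ^ 2 := by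
  simp only [stepProb, stepSign, Fintype.sum_bool, if_true, Bool.false_eq_true, if_false]
  rw [← hld]
  ring

end stepProb

section path

variable {xn Δx Δt lam : ℝ} {ξ : ℝ → ℕ → ℝ} {l k : ℕ}

lemma rwPath_top (s : ℕ → Bool) : rwPath xn Δx l s (l + 1) = xn := by
  simp [rwPath]

lemma rwDev_top (s : ℕ → Bool) : rwDev xn Δx Δt ξ l (l + 1) s = 0 := by
  simp [rwDev, rwPath, rwEta]

lemma rwDev_zero_zero (s : ℕ → Bool) :
    rwDev xn Δx Δt ξ 0 0 s = Δt * ξ xn 1 - Δx * stepSign (s 0) := by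
  simp [rwDev, rwPath, rwEta, stepSign]

lemma rwPath_update_top (hk : k ≤ l + 1) (σ : ℕ → Bool) (b : Bool) :
    rwPath xn Δx (l + 1) (Function.update σ (l + 1) b) k
      = rwPath (xn - Δx * stepSign b) Δx l σ k := by
  unfold rwPath
  rw [sum_Ico_succ_top hk, Function.update_self]
  have below_top : ∀ i ∈ Ico k (l + 1),
      (if Function.update σ (l + 1) b i then (1:ℝ) else -1) = if σ i then 1 else -1 := by
    intro i hi
    rw [Function.update_of_ne (by simp at hi; omega)]
  rw [sum_congr rfl below_top, stepSign]
  ring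

lemma rwEta_update_top (hk : k ≤ l + 1) (σ : ℕ → Bool) (b : Bool) :
    rwEta xn Δx Δt ξ (l + 1) (Function.update σ (l + 1) b) k
      = rwEta (xn - Δx * stepSign b) Δx Δt ξ l σ k + Δx * stepSign b - Δt * ξ xn (l + 2) := by
  unfold rwEta
  rw [sum_Ico_succ_top (by omega : k + 1 ≤ l + 2), rwPath_top]
  have below_top : ∀ i ∈ Ico (k + 1) (l + 2),
      ξ (rwPath xn Δx (l + 1) (Function.update σ (l + 1) b) i) i
        = ξ (rwPath (xn - Δx * stepSign b) Δx l σ i) i := by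
    intro i hi
    rw [rwPath_update_top (by simp at hi; omega)]
  rw [sum_congr rfl below_top]
  ring

lemma rwDev_update_top (hk : k ≤ l + 1) (σ : ℕ → Bool) (b : Bool) :
    rwDev xn Δx Δt ξ (l + 1) k (Function.update σ (l + 1) b)
      = rwDev (xn - Δx * stepSign b) Δx Δt ξ l k σ + (Δt * ξ xn (l + 2) - Δx * stepSign b) := by
  rw [rwDev, rwDev, rwPath_update_top hk, rwEta_update_top hk]
  ring

lemma rwWeight_eq_prod_stepProb (s : ℕ → Bool) :
    rwWeight xn Δx lam ξ l s
      = ∏ k ∈ range (l + 1), stepProb lam (ξ (rwPath xn Δx l s (k + 1)) (k + 1)) (s k) :=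
  rfl

lemma rwWeight_update_top (σ : ℕ → Bool) (b : Bool) :
    rwWeight xn Δx lam ξ (l + 1) (Function.update σ (l + 1) b)
      = stepProb lam (ξ xn (l + 2)) b * rwWeight (xn - Δx * stepSign b) Δx lam ξ l σ := by
  rw [rwWeight_eq_prod_stepProb, rwWeight_eq_prod_stepProb, prod_range_succ, rwPath_top,
    Function.update_self, mul_comm]
  congr 1
  refine prod_congr rfl fun i hi => ?_
  rw [mem_range] at hi
  rw [rwPath_update_top (by omega), Function.update_of_ne (by omega)]

lemma rwWeight_nonneg (hξ : ∀ x t, |lam * ξ x t| ≤ 1) (s : ℕ → Bool) :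
    0 ≤ rwWeight xn Δx lam ξ l s := by
  rw [rwWeight_eq_prod_stepProb]
  exact prod_nonneg fun _ _ => stepProb_nonneg (hξ _ _) _

end path

lemma extBool_snoc {l : ℕ} (s : Fin (l + 1) → Bool) (b : Bool) :
    extBool (l + 1) (Fin.snoc s b) = Function.update (extBool l s) (l + 1) b := by
  funext i
  rcases lt_trichotomy i (l + 1) with hi | rfl | hi
  · simp [extBool, hi, Nat.lt_succ_of_lt hi, Function.update_of_ne hi.ne, Fin.snoc]
  · simp [extBool, Fin.snoc]
  · simp only [extBool, Function.update_of_ne hi.ne']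
    rw [dif_neg (by omega), dif_neg (by omega)]

section expectation

variable {xn Δx Δt lam : ℝ} {ξ : ℝ → ℕ → ℝ} {l : ℕ}

lemma rwExp_zero (f : (ℕ → Bool) → ℝ) :
    rwExp xn Δx Δt lam ξ 0 f = ∑ b, stepProb lam (ξ xn 1) b * f (extBool 0 fun _ => b) := by
  rw [rwExp, ← (Equiv.funUnique (Fin 1) Bool).symm.sum_comp]
  refine Fintype.sum_congr _ _ fun b => ?_
  show rwWeight xn Δx lam ξ 0 (extBool 0 fun _ => b) * f (extBool 0 fun _ => b) = _
  simp [rwWeight_eq_prod_stepProb, rwPath_top, extBool]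

lemma rwExp_succ (f : (ℕ → Bool) → ℝ) :
    rwExp xn Δx Δt lam ξ (l + 1) f
      = ∑ b, stepProb lam (ξ xn (l + 2)) b *
          rwExp (xn - Δx * stepSign b) Δx Δt lam ξ l
            (fun σ => f (Function.update σ (l + 1) b)) := by
  rw [rwExp, ← (Fin.snocEquiv fun _ => Bool).sum_comp, Fintype.sum_prod_type]
  refine Fintype.sum_congr _ _ fun b => ?_
  have snoc_eq : ∀ s : Fin (l + 1) → Bool,
      (Fin.snocEquiv fun _ => Bool) (b, s) = Fin.snoc s b := fun _ => rfl
  simp only [snoc_eq, extBool_snoc, rwWeight_update_top, rwExp, mul_sum, mul_assoc]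

lemma rwExp_add (f g : (ℕ → Bool) → ℝ) :
    rwExp xn Δx Δt lam ξ l (fun s => f s + g s)
      = rwExp xn Δx Δt lam ξ l f + rwExp xn Δx Δt lam ξ l g := by
  simp only [rwExp, mul_add, sum_add_distrib]

lemma rwExp_const_mul (c : ℝ) (f : (ℕ → Bool) → ℝ) :
    rwExp xn Δx Δt lam ξ l (fun s => c * f s) = c * rwExp xn Δx Δt lam ξ l f := by
  simp only [rwExp, mul_sum, mul_left_comm]

lemma rwExp_one : rwExp xn Δx Δt lam ξ l (fun _ => 1) = 1 := by
  induction l generalizing xn with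
  | zero => simp only [rwExp_zero, mul_one, sum_stepProb]
  | succ l ih => simp only [rwExp_succ, ih, mul_one, sum_stepProb]

lemma rwExp_const (c : ℝ) : rwExp xn Δx Δt lam ξ l (fun _ => c) = c :=
  calc rwExp xn Δx Δt lam ξ l (fun _ => c) = c * rwExp xn Δx Δt lam ξ l (fun _ => 1) := by
        simp only [← rwExp_const_mul, mul_one]
    _ = c := by rw [rwExp_one, mul_one]

end expectation

section moments

variable {xn Δx Δt lam : ℝ} {ξ : ℝ → ℕ → ℝ} {l k : ℕ}

lemma sq_rwExp_le_rwExp_sq (hξ : ∀ x t, |lam * ξ x t| ≤ 1) (f : (ℕ → Bool) → ℝ) :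
    rwExp xn Δx Δt lam ξ l f ^ 2 ≤ rwExp xn Δx Δt lam ξ l (fun s => f s ^ 2) := by
  calc rwExp xn Δx Δt lam ξ l f ^ 2
      ≤ rwExp xn Δx Δt lam ξ l (fun _ => 1) * rwExp xn Δx Δt lam ξ l (fun s => f s ^ 2) := by
        simp only [rwExp, mul_one]
        exact sum_sq_le_sum_mul_sum_of_sq_le_mul _ (fun _ _ => rwWeight_nonneg hξ _)
          (fun _ _ => mul_nonneg (rwWeight_nonneg hξ _) (sq_nonneg _))
          (fun _ _ => le_of_eq (by ring))
    _ = rwExp xn Δx Δt lam ξ l (fun s => f s ^ 2) := by rw [rwExp_one, one_mul]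

lemma rwExp_add_const_sq {f : (ℕ → Bool) → ℝ} (hf : rwExp xn Δx Δt lam ξ l f = 0) (a : ℝ) :
    rwExp xn Δx Δt lam ξ l (fun s => (f s + a) ^ 2)
      = rwExp xn Δx Δt lam ξ l (fun s => f s ^ 2) + a ^ 2 := by
  have expand : ∀ s, (f s + a) ^ 2 = f s ^ 2 + (2 * a * f s + a ^ 2) := fun s => by ring
  simp only [expand, rwExp_add, rwExp_const_mul, hf, rwExp_const]
  ring

lemma rwExp_rwDev_top (g : ℝ → ℝ) :
    rwExp xn Δx Δt lam ξ l (fun s => g (rwDev xn Δx Δt ξ l (l + 1) s)) = g 0 := by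
  simp only [rwDev_top, rwExp_const]

lemma rwExp_rwDev (hld : lam * Δx = Δt) (hk : k ≤ l + 1) :
    rwExp xn Δx Δt lam ξ l (rwDev xn Δx Δt ξ l k) = 0 := by
  induction l generalizing xn k with
  | zero =>
    rcases Nat.le_one_iff_eq_zero_or_eq_one.mp hk with rfl | rfl
    · simp only [rwExp_zero, rwDev_zero_zero]
      exact sum_stepProb_mul_increment hld
    · exact rwExp_rwDev_top id
  | succ l ih =>
    rcases Nat.le_succ_iff.mp hk with hk | rfl
    · simp only [rwExp_succ, rwDev_update_top hk, rwExp_add, ih hk, rwExp_const, zero_add]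
      exact sum_stepProb_mul_increment hld
    · exact rwExp_rwDev_top id

lemma rwExp_rwDev_sq_le (hld : lam * Δx = Δt) (hξ : ∀ x t, |lam * ξ x t| ≤ 1)
    (hk : k ≤ l + 1) :
    rwExp xn Δx Δt lam ξ l (fun s => rwDev xn Δx Δt ξ l k s ^ 2)
      ≤ ((l + 1 - k : ℕ) : ℝ) * Δx ^ 2 := by
  induction l generalizing xn k with
  | zero =>
    rcases Nat.le_one_iff_eq_zero_or_eq_one.mp hk with rfl | rfl
    · simp only [rwExp_zero, rwDev_zero_zero]
      refine (sum_stepProb_mul_increment_sq hld).trans_le ?_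
      norm_num
      positivity
    · rw [rwExp_rwDev_top (· ^ 2)]
      norm_num
  | succ l ih =>
    rcases Nat.le_succ_iff.mp hk with hk | rfl
    · set c := ξ xn (l + 2)
      set V := ((l + 1 - k : ℕ) : ℝ) * Δx ^ 2
      calc rwExp xn Δx Δt lam ξ (l + 1) (fun s => rwDev xn Δx Δt ξ (l + 1) k s ^ 2)
          = ∑ b, stepProb lam c b *
              (rwExp (xn - Δx * stepSign b) Δx Δt lam ξ l
                  (fun s => rwDev (xn - Δx * stepSign b) Δx Δt ξ l k s ^ 2)
                + (Δt * c - Δx * stepSign b) ^ 2) := by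
            simp only [rwExp_succ, rwDev_update_top hk, rwExp_add_const_sq (rwExp_rwDev hld hk)]
            rfl
        _ ≤ ∑ b, stepProb lam c b * (V + (Δt * c - Δx * stepSign b) ^ 2) :=
            sum_le_sum fun b _ => mul_le_mul_of_nonneg_left
              (by linarith [ih hk (xn := xn - Δx * stepSign b)]) (stepProb_nonneg (hξ _ _) b)
        _ = V + (Δx ^ 2 - (Δt * c) ^ 2) := by
            simp only [mul_add, sum_add_distrib, ← sum_mul, sum_stepProb, one_mul,
              sum_stepProb_mul_increment_sq hld]
        _ ≤ ((l + 1 + 1 - k : ℕ) : ℝ) * Δx ^ 2 := by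
            rw [show l + 1 + 1 - k = (l + 1 - k) + 1 by omega]
            push_cast
            nlinarith [sq_nonneg (Δt * c)]
    · rw [rwExp_rwDev_top (· ^ 2)]
      norm_num

end moments

theorem stmt_6 (xn Δx Δt lam : ℝ) (l : ℕ) (ξ : ℝ → ℕ → ℝ)
    (hΔx : 0 < Δx) (hΔt : 0 < Δt) (hlam : lam = Δt / Δx)
    (hξ : ∀ x k, |ξ x k| ≤ 1 / lam) :
    ∀ k ≤ l + 1,
      (rwExp xn Δx Δt lam ξ l
          (fun s => |rwPath xn Δx l s k - rwEta xn Δx Δt ξ l s k|))^2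
        ≤ rwExp xn Δx Δt lam ξ l
            (fun s => |rwPath xn Δx l s k - rwEta xn Δx Δt ξ l s k|^2)
      ∧ rwExp xn Δx Δt lam ξ l
            (fun s => |rwPath xn Δx l s k - rwEta xn Δx Δt ξ l s k|^2)
          ≤ (((l + 1 - k : ℕ) : ℝ) * Δt) / lam * Δx := by
  intro k hk
  have hlam_pos : 0 < lam := hlam ▸ div_pos hΔt hΔx
  have hld : lam * Δx = Δt := by rw [hlam]; field_simp
  have hξ' : ∀ x t, |lam * ξ x t| ≤ 1 := fun x t => by
    rw [abs_mul, abs_of_pos hlam_pos]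
    exact (le_div_iff₀' hlam_pos).mp (hξ x t)
  refine ⟨sq_rwExp_le_rwExp_sq hξ' _, ?_⟩
  have bound : ((l + 1 - k : ℕ) : ℝ) * Δt / lam * Δx = ((l + 1 - k : ℕ) : ℝ) * Δx ^ 2 := by
    rw [← hld]; field_simp
  simp only [sq_abs, bound]
  exact rwExp_rwDev_sq_le hld hξ' hk
end

section
/- Let ω = (ω₁, ω₂) ∈ ℝ² satisfy the (ν,τ)-Diophantine condition |ω₁ z₁ + ω₂ z₂| ≥ ν (|z₁|+|z₂|)^{-τ} for all z ∈ ℤ² \ {0}, with ν > 0, τ > 0. Then for every ε > 0 there is a constant b₄ = b₄(ω, ν, τ) such that the orbit segment { θ + ωs mod ℤ² : 0 ≤ s ≤ b₄ / ε^τ } is ε-dense in the 2-torus 𝕋² = ℝ²/ℤ² for every θ ∈ ℝ², i.e., every point of 𝕋² is within ℓ¹-distance ε of some point of the segment. -/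
/-!
Following the flow until its first coordinate reaches `p.1` exactly, the second coordinate has
been rotated by the slope `α = ω.2 / |ω.1|` once per unit of first-coordinate travel, and `α`
inherits a one-dimensional Diophantine condition `|k α - m| ≥ c |k| ^ (-τ)`. So it suffices to
show that `{k α mod 1 : k ≤ C ε ^ (-τ)}` is `ε`-dense in the circle.

This is done dyadically. Suppose the first `K_n` multiples of `α` are `2⁻ⁿ`-dense. Dirichlet's
theorem gives `q ≤ 2ⁿ⁺¹` with `0 < |q α - j| ≤ 2⁻⁽ⁿ⁺¹⁾`, while the Diophantine condition gives
`|q α - j| ≥ c q ^ (-τ)`. Starting from a `2⁻ⁿ`-approximation and walking in steps of `q α - j`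
across an interval of length `2 · 2⁻ⁿ` costs at most `4 (2 ^ τ) ^ (n + 1) / c` further multiples
of `α`, so `K_n` grows like `(2 ^ τ) ^ n`, i.e. like `ε ^ (-τ)`.
-/

open Set

def IsDiophantine (c τ α : ℝ) : Prop :=
  ∀ k : ℤ, k ≠ 0 → ∀ m : ℤ, c * |(k : ℝ)| ^ (-τ) ≤ |k * α - m|

def RotationOrbitDense (α K ε : ℝ) : Prop :=
  ∀ x : ℝ, ∃ k : ℕ, ∃ m : ℤ, (k : ℝ) ≤ K ∧ |x - k * α - m| ≤ ε

lemma exists_nat_le_div_abs_sub_mul_le {t d : ℝ} (hd : d ≠ 0) (ht : 0 ≤ t / d) :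
    ∃ i : ℕ, (i : ℝ) ≤ t / d ∧ |t - i * d| ≤ |d| := by
  refine ⟨⌊t / d⌋₊, Nat.floor_le ht, ?_⟩
  have hfrac : |t / d - ⌊t / d⌋₊| ≤ 1 := by
    rw [abs_of_nonneg (sub_nonneg.mpr (Nat.floor_le ht))]
    linarith [Nat.lt_floor_add_one (t / d)]
  calc |t - ⌊t / d⌋₊ * d| = |d| * |t / d - ⌊t / d⌋₊| := by
        rw [← abs_mul]; congr 1; field_simp
    _ ≤ |d| := mul_le_of_le_one_right (abs_nonneg d) hfrac

namespace RotationOrbitDense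

variable {α K K' ε ε' : ℝ}

lemma zero_one (α : ℝ) : RotationOrbitDense α 0 1 := fun x =>
  ⟨0, round x, by simp, by simpa using (abs_sub_round x).trans (by norm_num)⟩

lemma mono (h : RotationOrbitDense α K ε) (hK : K ≤ K') (hε : ε ≤ ε') :
    RotationOrbitDense α K' ε' := fun x =>
  let ⟨k, m, hk, hx⟩ := h x
  ⟨k, m, hk.trans hK, hx.trans hε⟩

/-- Walk in steps of `d = q α - j` from an `ε`-approximation of `x - ε d / |d|`, which lies on
the correct side of `x`. -/
lemma refine (h : RotationOrbitDense α K ε) {q : ℕ} {j : ℤ} (hd : (q * α - j : ℝ) ≠ 0) :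
    RotationOrbitDense α (K + 2 * ε * q / |q * α - j|) |q * α - j| := by
  set d : ℝ := q * α - j
  intro x
  obtain ⟨k, m, hk, hx⟩ := h (x - ε * d / |d|)
  set t := x - k * α - m with ht
  have hd' : 0 < |d| := abs_pos.mpr hd
  have hsplit : t / d = ε / |d| + (x - ε * d / |d| - k * α - m) / d := by
    rw [ht]; field_simp; ring
  have hr : |(x - ε * d / |d| - k * α - m) / d| ≤ ε / |d| := by
    rw [abs_div]; gcongr
  have h2 : 2 * ε / |d| = ε / |d| + ε / |d| := by ring
  have htd : 0 ≤ t / d ∧ t / d ≤ 2 * ε / |d| := by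
    constructor <;> linarith [(abs_le.mp hr).1, (abs_le.mp hr).2]
  obtain ⟨i, hi, hti⟩ := exists_nat_le_div_abs_sub_mul_le hd htd.1
  refine ⟨k + i * q, m - i * j, ?_, ?_⟩
  · have hiq : (i : ℝ) * q ≤ 2 * ε * q / |d| := by
      calc (i : ℝ) * q ≤ 2 * ε / |d| * q := by gcongr; exact hi.trans htd.2
        _ = 2 * ε * q / |d| := by ring
    push_cast
    linarith
  · convert hti using 2
    push_cast
    ring

end RotationOrbitDense

namespace IsDiophantine

variable {c τ α : ℝ}

lemma neg (h : IsDiophantine c τ α) : IsDiophantine c τ (-α) := fun k hk m => by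
  have e : (k : ℝ) * -α - m = -(k * α - ((-m : ℤ) : ℝ)) := by push_cast; ring
  rw [e, abs_neg]
  exact h k hk (-m)

lemma exists_return (h : IsDiophantine c τ α) {N : ℕ} (hN : 0 < N) :
    ∃ q : ℕ, ∃ j : ℤ, 0 < q ∧ q ≤ N ∧ c ≤ (q : ℝ) ^ τ * |q * α - j| ∧
      |q * α - j| ≤ (N : ℝ)⁻¹ := by
  obtain ⟨q, hq, hqN, hret⟩ := Real.exists_nat_abs_mul_sub_round_le α hN
  refine ⟨q, round (q * α), hq, hqN, ?_, hret.trans ?_⟩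
  · have hlow := h q (by exact_mod_cast hq.ne') (round (q * α))
    rw [Int.cast_natCast, Nat.abs_cast, Real.rpow_neg (Nat.cast_nonneg q), ← div_eq_mul_inv,
      div_le_iff₀ (by positivity)] at hlow
    rwa [mul_comm]
  · rw [one_div]; gcongr; linarith

lemma exists_rotationOrbitDense_dyadic (h : IsDiophantine c τ α) (hc : 0 < c) (hτ : 0 < τ) :
    ∃ A > 0, ∀ n : ℕ, RotationOrbitDense α (A * (2 ^ τ) ^ n) (2 ^ n)⁻¹ := by
  set B : ℝ := 2 ^ τ
  have hB : 1 < B := Real.one_lt_rpow (by norm_num) hτ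
  -- `A` solves `A * B ^ n + 4 * B ^ (n + 1) / c = A * B ^ (n + 1)`, the cost of one refinement.
  set A := 4 * B / (c * (B - 1))
  have hA : 0 < A := by
    have : 0 < B - 1 := by linarith
    positivity
  have hA' : A * (B - 1) = 4 * B / c := by
    have : B - 1 ≠ 0 := by linarith
    simp only [A]; field_simp
  refine ⟨A, hA, fun n => ?_⟩
  induction n with
  | zero => simpa using (RotationOrbitDense.zero_one α).mono hA.le le_rfl
  | succ n ih =>
    obtain ⟨q, j, hq, hqN, hlow, hup⟩ := h.exists_return (N := 2 ^ (n + 1)) (by positivity)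
    have hd : 0 < |q * α - j| := pos_of_mul_pos_right (hc.trans_le hlow) (by positivity)
    refine (ih.refine (abs_pos.mp hd)).mono ?_ (by exact_mod_cast hup)
    have hinv : 1 / |q * α - j| ≤ (q : ℝ) ^ τ / c := by
      rwa [div_le_div_iff₀ hd hc, one_mul]
    have hqτ : (q : ℝ) ^ τ ≤ B ^ (n + 1) := by
      rw [Real.rpow_pow_comm zero_le_two]
      gcongr
      exact_mod_cast hqN
    have hwalk : 2 * (2 ^ n)⁻¹ * q / |q * α - j| ≤ 4 * B ^ (n + 1) / c :=
      calc 2 * (2 ^ n)⁻¹ * q / |q * α - j| = 2 * (2 ^ n)⁻¹ * q * (1 / |q * α - j|) := by ring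
        _ ≤ 2 * (2 ^ n)⁻¹ * 2 ^ (n + 1) * (B ^ (n + 1) / c) := by
          gcongr (2 * (2 ^ n)⁻¹ * ?_) * ?_
          · exact_mod_cast hqN
          · exact hinv.trans (by gcongr)
        _ = 4 * B ^ (n + 1) / c := by field_simp; ring
    calc A * B ^ n + 2 * (2 ^ n)⁻¹ * q / |q * α - j| ≤ A * B ^ n + 4 * B ^ (n + 1) / c := by
          gcongr
      _ = A * B ^ n + 4 * B / c * B ^ n := by ring
      _ = A * B ^ (n + 1) := by rw [← hA']; ring

lemma exists_rotationOrbitDense (h : IsDiophantine c τ α) (hc : 0 < c) (hτ : 0 < τ) :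
    ∃ C > 0, ∀ ε ∈ Ioc (0 : ℝ) 1, RotationOrbitDense α (C / ε ^ τ) ε := by
  obtain ⟨A, hA, hdyadic⟩ := h.exists_rotationOrbitDense_dyadic hc hτ
  refine ⟨A * 2 ^ τ, by positivity, fun ε ⟨hε, hε1⟩ => ?_⟩
  obtain ⟨n, hn, hn'⟩ := exists_nat_pow_near (one_le_one_div hε hε1) one_lt_two
  refine (hdyadic (n + 1)).mono ?_ ?_
  · have h2n : (2 : ℝ) ^ (n + 1) ≤ 2 / ε :=
      calc (2 : ℝ) ^ (n + 1) = 2 * 2 ^ n := pow_succ' 2 n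
        _ ≤ 2 * (1 / ε) := by gcongr
        _ = 2 / ε := by ring
    calc A * (2 ^ τ) ^ (n + 1) = A * (2 ^ (n + 1)) ^ τ := by rw [Real.rpow_pow_comm zero_le_two]
      _ ≤ A * (2 / ε) ^ τ := by gcongr
      _ = A * 2 ^ τ / ε ^ τ := by rw [Real.div_rpow zero_le_two hε.le, mul_div_assoc]
  · rw [inv_le_comm₀ (by positivity) hε, ← one_div]
    exact hn'.le

end IsDiophantine

def IsDiophantineVector (ν τ : ℝ) (ω : ℝ × ℝ) : Prop :=
  ∀ z : ℤ × ℤ, z ≠ 0 →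
    ν * (((|z.1| + |z.2| : ℤ) : ℝ)) ^ (-τ) ≤ |ω.1 * (z.1 : ℝ) + ω.2 * (z.2 : ℝ)|

namespace IsDiophantineVector

variable {ν τ : ℝ} {ω : ℝ × ℝ}

lemma fst_ne_zero (h : IsDiophantineVector ν τ ω) (hν : 0 < ν) : ω.1 ≠ 0 := by
  have h10 := h (1, 0) (by simp)
  norm_num at h10
  exact abs_pos.mp (hν.trans_le h10)

lemma exists_isDiophantine_div (h : IsDiophantineVector ν τ ω) (hν : 0 < ν) (hτ : 0 ≤ τ) :
    ∃ c > 0, IsDiophantine c τ (ω.2 / ω.1) := by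
  have hω₁ : 0 < |ω.1| := abs_pos.mpr (h.fst_ne_zero hν)
  set α := ω.2 / ω.1
  refine ⟨min (ν / |ω.1| * (|α| + 2) ^ (-τ)) 1, by positivity, fun k hk m => ?_⟩
  have hk1 : 1 ≤ |(k : ℝ)| := by exact_mod_cast Int.one_le_abs hk
  rcases le_or_gt 1 |k * α - m| with hfar | hnear
  · calc min (ν / |ω.1| * (|α| + 2) ^ (-τ)) 1 * |(k : ℝ)| ^ (-τ) ≤ 1 * 1 := by
          gcongr
          · exact min_le_right _ _
          · exact Real.rpow_le_one_of_one_le_of_nonpos hk1 (by linarith)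
      _ ≤ |k * α - m| := by linarith
  · have hm : |(m : ℝ)| + |(k : ℝ)| ≤ (|α| + 2) * |(k : ℝ)| := by
      have : |(m : ℝ)| ≤ |(k : ℝ)| * |α| + 1 := by
        calc |(m : ℝ)| ≤ |k * α| + |k * α - m| := by
              linarith [abs_sub_abs_le_abs_sub (m : ℝ) (k * α), abs_sub_comm (m : ℝ) (k * α)]
          _ ≤ |(k : ℝ)| * |α| + 1 := by rw [abs_mul]; linarith
      nlinarith
    have hz : ν * (|(m : ℝ)| + |(k : ℝ)|) ^ (-τ) ≤ |ω.1| * |k * α - m| := by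
      have := h (-m, k) (by simp [hk])
      rw [← abs_mul, show ω.1 * (k * α - m) = ω.1 * ((-m : ℤ) : ℝ) + ω.2 * k by
        simp only [α]; push_cast; field_simp [h.fst_ne_zero hν]; ring]
      simpa using this
    calc min (ν / |ω.1| * (|α| + 2) ^ (-τ)) 1 * |(k : ℝ)| ^ (-τ)
        ≤ ν / |ω.1| * (|α| + 2) ^ (-τ) * |(k : ℝ)| ^ (-τ) := by gcongr; exact min_le_left _ _
      _ = ν / |ω.1| * ((|α| + 2) * |(k : ℝ)|) ^ (-τ) := by
          rw [Real.mul_rpow (by positivity) (abs_nonneg _)]; ring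
      _ ≤ ν / |ω.1| * (|(m : ℝ)| + |(k : ℝ)|) ^ (-τ) := by
          refine mul_le_mul_of_nonneg_left (Real.rpow_le_rpow_of_nonpos ?_ hm (by linarith))
            (by positivity)
          linarith [abs_nonneg (m : ℝ)]
      _ ≤ |k * α - m| := by rw [div_mul_eq_mul_div, div_le_iff₀' hω₁]; exact hz

lemma exists_isDiophantine_div_abs (h : IsDiophantineVector ν τ ω) (hν : 0 < ν) (hτ : 0 ≤ τ) :
    ∃ c > 0, IsDiophantine c τ (ω.2 / |ω.1|) := by
  obtain ⟨c, hc, hα⟩ := h.exists_isDiophantine_div hν hτ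
  refine ⟨c, hc, ?_⟩
  rcases abs_choice ω.1 with habs | habs
  · rwa [habs]
  · rw [habs, div_neg]
    exact hα.neg

end IsDiophantineVector

def LinearFlowOrbitDense (ω : ℝ × ℝ) (T ε : ℝ) : Prop :=
  ∀ θ p : ℝ × ℝ, ∃ s ∈ Icc 0 T, ∃ z : ℤ × ℤ,
    |p.1 - (θ.1 + ω.1 * s) - z.1| + |p.2 - (θ.2 + ω.2 * s) - z.2| ≤ ε

namespace LinearFlowOrbitDense

variable {ω : ℝ × ℝ} {K T T' ε : ℝ}

lemma mono (h : LinearFlowOrbitDense ω T ε) (hT : T ≤ T') : LinearFlowOrbitDense ω T' ε :=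
  fun θ p =>
    let ⟨s, ⟨hs0, hsT⟩, hz⟩ := h θ p
    ⟨s, ⟨hs0, hsT.trans hT⟩, hz⟩

lemma of_one_le (hT : 0 ≤ T) (hε : 1 ≤ ε) : LinearFlowOrbitDense ω T ε := fun θ p =>
  ⟨0, ⟨le_rfl, hT⟩, (round (p.1 - θ.1), round (p.2 - θ.2)), by
    simp only [mul_zero, add_zero]
    linarith [abs_sub_round (p.1 - θ.1), abs_sub_round (p.2 - θ.2)]⟩

lemma of_rotationOrbitDense_of_pos (hω₁ : 0 < ω.1) (h : RotationOrbitDense (ω.2 / ω.1) K ε) :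
    LinearFlowOrbitDense ω ((K + 1) / ω.1) ε := by
  intro θ p
  obtain ⟨k, m, hk, hkm⟩ := h (p.2 - θ.2 - ω.2 / ω.1 * Int.fract (p.1 - θ.1))
  set u := Int.fract (p.1 - θ.1) with hu
  refine ⟨(u + k) / ω.1, ⟨by positivity, ?_⟩, (⌊p.1 - θ.1⌋ - k, m), ?_⟩
  · gcongr ?_ / _
    linarith [Int.fract_lt_one (p.1 - θ.1)]
  · have hs : ω.1 * ((u + k) / ω.1) = u + k := by field_simp
    have hs' : ω.2 * ((u + k) / ω.1) = ω.2 / ω.1 * (u + k) := by ring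
    have hfirst : p.1 - (θ.1 + (u + k)) - ((⌊p.1 - θ.1⌋ - k : ℤ) : ℝ) = 0 := by
      rw [hu, ← Int.self_sub_floor]; push_cast; ring
    dsimp only
    rw [hs, hs', hfirst, abs_zero, zero_add]
    exact le_of_eq_of_le (congrArg abs (by ring)) hkm

lemma of_rotationOrbitDense (hω₁ : ω.1 ≠ 0) (h : RotationOrbitDense (ω.2 / |ω.1|) K ε) :
    LinearFlowOrbitDense ω ((K + 1) / |ω.1|) ε := by
  rcases hω₁.lt_or_gt with hneg | hpos
  · intro θ p
    have hflip := of_rotationOrbitDense_of_pos (ω := (-ω.1, ω.2)) (neg_pos.mpr hneg)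
      (by rwa [abs_of_neg hneg] at h) (-θ.1, θ.2) (-p.1, p.2)
    obtain ⟨s, hs, z, hz⟩ := hflip
    refine ⟨s, by rwa [abs_of_neg hneg], (-z.1, z.2), le_of_eq_of_le ?_ hz⟩
    rw [← abs_neg (p.1 - _ - _)]
    push_cast
    congr 2
    ring
  · rw [abs_of_pos hpos] at h ⊢
    exact of_rotationOrbitDense_of_pos hpos h

end LinearFlowOrbitDense

theorem stmt_16 (ν τ : ℝ) (hν : 0 < ν) (hτ : 0 < τ) (ω : ℝ × ℝ)
    (hdio : ∀ z : ℤ × ℤ, z ≠ 0 →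
      ν * (((|z.1| + |z.2| : ℤ) : ℝ)) ^ (-τ) ≤ |ω.1 * (z.1 : ℝ) + ω.2 * (z.2 : ℝ)|) :
    ∃ b₄ > 0, ∀ ε > 0, ∀ θ p : ℝ × ℝ, ∃ s ∈ Set.Icc (0:ℝ) (b₄ / ε ^ τ),
      ∃ z : ℤ × ℤ,
        |p.1 - (θ.1 + ω.1 * s) - (z.1 : ℝ)| + |p.2 - (θ.2 + ω.2 * s) - (z.2 : ℝ)| ≤ ε := by
  have hω : IsDiophantineVector ν τ ω := hdio
  have hω₁ : 0 < |ω.1| := abs_pos.mpr (hω.fst_ne_zero hν)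
  obtain ⟨c, hc, hα⟩ := hω.exists_isDiophantine_div_abs hν hτ.le
  obtain ⟨C, hC, hdense⟩ := hα.exists_rotationOrbitDense hc hτ
  refine ⟨(C + 1) / |ω.1|, by positivity, fun ε hε => ?_⟩
  change LinearFlowOrbitDense ω _ ε
  rcases le_or_gt ε 1 with hε1 | hε1
  · refine (LinearFlowOrbitDense.of_rotationOrbitDense (hω.fst_ne_zero hν)
      (hdense ε ⟨hε, hε1⟩)).mono ?_
    have : 1 ≤ 1 / ε ^ τ := one_le_one_div (by positivity) (Real.rpow_le_one hε.le hε1 hτ.le)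
    calc (C / ε ^ τ + 1) / |ω.1| ≤ (C / ε ^ τ + 1 / ε ^ τ) / |ω.1| := by gcongr
      _ = (C + 1) / |ω.1| / ε ^ τ := by ring
  · exact LinearFlowOrbitDense.of_one_le (by positivity) hε1.le
end
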